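/- arXiv:0905.0573 — 2 statements merged into one kernel-verified Lean document; each statement's English description precedes it below -/
import Mathlib

section
/- Let λ₁, …, λₙ ∈ 𝔻 with max_j |λ_j| ≤ r < 1, let B be the associated Blaschke product, and let f ∈ K_B = H² ⊖ BH². Then ‖f'‖_{H²} ≤ (3n/(1-r))·‖f‖_{H²}. -/
/-!
Let `e_k = (∏_{j<k} b_j) · k_k` be the Malmquist functions, `k_k` the normalized Szegő kernel
at `λ_k`. On the unit circle every Blaschke factor is unimodular, so for `m ≤ k` the product
`e_k · conj e_m` equals `z G(z) / (z - λ_m)` with `G` holomorphic on the closed disc, and the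
Cauchy formula shows that the `e_k` are orthonormal. The logarithmic derivative of `e_k` is
`∑_{j<k} b_j'/b_j + k_k'/k_k`, hence for `f = ∑ c_k e_k`
  `f' = ∑_j (b_j'/b_j) · ∑_{k>j} c_k e_k + ∑_j (k_j'/k_j) · c_j e_j`.
On the circle `|b_j'/b_j| ≤ 2/(1-r)` and `|k_j'/k_j| ≤ 1/(1-r)`, and by orthonormality both
`∑_{k>j} c_k e_k` and `c_j e_j` have norm at most `‖f‖`; summing over the `n` indices gives
`3n/(1-r)`.
-/

open Complex Metric

noncomputable def blaschke6 (l z : ℂ) : ℂ := (l - z) / (1 - (starRingEnd ℂ) l * z)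

/-- The Malmquist basis of the model space `K_B`. -/
noncomputable def malmquist6 (n : ℕ) (l : Fin n → ℂ) (k : Fin n) (z : ℂ) : ℂ :=
  (∏ j ∈ Finset.univ.filter (fun j => j < k), blaschke6 (l j) z) *
    ((Real.sqrt (1 - ‖l k‖ ^ 2) : ℂ) / (1 - (starRingEnd ℂ) (l k) * z))

open MeasureTheory Set
open scoped Real ComplexConjugate
open Real (circleAverage)

namespace Malmquist

section CircleL2Norm

variable {E : Type*} [NormedAddCommGroup E] {f g : ℂ → E}

noncomputable def circleL2Norm (f : ℂ → E) : ℝ :=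
  √(circleAverage (fun z => ‖f z‖ ^ 2) 0 1)

lemma circleL2Norm_congr (h : EqOn f g (sphere 0 1)) : circleL2Norm f = circleL2Norm g := by
  unfold circleL2Norm
  congr 1
  exact Real.circleAverage_congr_sphere fun z hz => by simp only [h (by simpa using hz)]

lemma memLp_comp_circleMap (hf : ContinuousOn f (sphere 0 1)) :
    MemLp (fun θ => f (circleMap 0 1 θ)) 2 (volume.restrict (Ioc 0 (2 * π))) := by
  have hc : Continuous (fun θ => f (circleMap 0 1 θ)) :=
    hf.comp_continuous (continuous_circleMap 0 1) (fun θ => circleMap_mem_sphere 0 zero_le_one θ)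
  exact (memLp_two_iff_integrable_sq_norm hc.aestronglyMeasurable).2
    (hc.norm.pow 2).integrableOn_Ioc

lemma circleL2Norm_eq_eLpNorm (hf : ContinuousOn f (sphere 0 1)) :
    circleL2Norm f = √(2 * π)⁻¹ *
      (eLpNorm (fun θ => f (circleMap 0 1 θ)) 2 (volume.restrict (Ioc 0 (2 * π)))).toReal := by
  rw [(memLp_comp_circleMap hf).eLpNorm_eq_integral_rpow_norm two_ne_zero ENNReal.ofNat_ne_top,
    ENNReal.toReal_ofReal (by positivity), circleL2Norm, Real.circleAverage_def, smul_eq_mul,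
    Real.sqrt_mul (by positivity), intervalIntegral.integral_of_le (by positivity)]
  simp [Real.sqrt_eq_rpow, one_div]

lemma circleL2Norm_add_le (hf : ContinuousOn f (sphere 0 1))
    (hg : ContinuousOn g (sphere 0 1)) :
    circleL2Norm (fun z => f z + g z) ≤ circleL2Norm f + circleL2Norm g := by
  rw [circleL2Norm_eq_eLpNorm (f := fun z => f z + g z) (hf.add hg), circleL2Norm_eq_eLpNorm hf,
    circleL2Norm_eq_eLpNorm hg, ← mul_add]
  gcongr
  exact ENNReal.toReal_le_add (eLpNorm_add_le (memLp_comp_circleMap hf).1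
    (memLp_comp_circleMap hg).1 one_le_two) (memLp_comp_circleMap hf).eLpNorm_ne_top
    (memLp_comp_circleMap hg).eLpNorm_ne_top

lemma circleL2Norm_sum_le {ι : Type*} (s : Finset ι) {f : ι → ℂ → E}
    (hf : ∀ i ∈ s, ContinuousOn (f i) (sphere 0 1)) :
    circleL2Norm (fun z => ∑ i ∈ s, f i z) ≤ ∑ i ∈ s, circleL2Norm (f i) := by
  induction s using Finset.cons_induction with
  | empty => simp [circleL2Norm, Real.circleAverage_def]
  | cons i s hi ih =>
    rw [Finset.forall_mem_cons] at hf
    simp only [Finset.sum_cons]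
    exact (circleL2Norm_add_le hf.1 (continuousOn_finsetSum s hf.2)).trans
      (add_le_add_right (ih hf.2) _)

lemma circleL2Norm_le_mul {F : Type*} [NormedAddCommGroup F] {g : ℂ → F} {C : ℝ}
    (hf : ContinuousOn f (sphere 0 1)) (hg : ContinuousOn g (sphere 0 1)) (hC : 0 ≤ C)
    (h : ∀ z ∈ sphere (0 : ℂ) 1, ‖f z‖ ≤ C * ‖g z‖) :
    circleL2Norm f ≤ C * circleL2Norm g := by
  rw [circleL2Norm_eq_eLpNorm hf, circleL2Norm_eq_eLpNorm hg, mul_left_comm]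
  gcongr
  have hle := eLpNorm_le_mul_eLpNorm_of_ae_le_mul (p := 2)
    (μ := volume.restrict (Ioc 0 (2 * π))) (f := fun θ => f (circleMap 0 1 θ))
    (g := fun θ => g (circleMap 0 1 θ)) (c := C)
    (ae_of_all _ fun θ => h _ (circleMap_mem_sphere 0 zero_le_one θ))
  refine (ENNReal.toReal_mono (ENNReal.mul_ne_top ENNReal.ofReal_ne_top
    (memLp_comp_circleMap hg).eLpNorm_ne_top) hle).trans_eq ?_
  rw [ENNReal.toReal_mul, ENNReal.toReal_ofReal hC]

end CircleL2Norm

lemma circleL2Norm_mul_le {g f : ℂ → ℂ} {C : ℝ} (hg : ContinuousOn g (sphere 0 1))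
    (hf : ContinuousOn f (sphere 0 1)) (hgC : ∀ z ∈ sphere (0 : ℂ) 1, ‖g z‖ ≤ C) :
    circleL2Norm (fun z => g z * f z) ≤ C * circleL2Norm f := by
  have hC : 0 ≤ C := (norm_nonneg _).trans (hgC 1 (by simp))
  refine circleL2Norm_le_mul (hg.mul hf) hf hC fun z hz => ?_
  rw [norm_mul]
  exact mul_le_mul_of_nonneg_right (hgC z hz) (norm_nonneg _)

theorem circleL2Norm_sum_of_orthonormal {ι : Type*} [Fintype ι] [DecidableEq ι]
    {e : ι → ℂ → ℂ} (he : ∀ i, ContinuousOn (e i) (sphere 0 1))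
    (horth : ∀ i j, circleAverage (fun z => e i z * conj (e j z)) 0 1 = if i = j then 1 else 0)
    (c : ι → ℂ) :
    circleL2Norm (fun z => ∑ i, c i * e i z) = √(∑ i, ‖c i‖ ^ 2) := by
  have hu : ContinuousOn (fun z => ∑ i, c i * e i z) (sphere 0 1) :=
    continuousOn_finsetSum _ fun i _ => continuousOn_const.mul (he i)
  have hint : ∀ i j (a : ℂ), CircleIntegrable (fun z => a • (e i z * conj (e j z))) 0 1 :=
    fun i j a => (((he i).mul (continuous_conj.comp_continuousOn (he j))).circleIntegrable
      zero_le_one).const_smul (a := a)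
  have hsq : CircleIntegrable (fun z => ‖∑ i, c i * e i z‖ ^ 2) 0 1 :=
    ((continuous_norm.comp_continuousOn hu).pow 2).circleIntegrable zero_le_one
  have hexpand : ∀ z, (∑ i, c i * e i z) * conj (∑ i, c i * e i z) =
      ∑ i, ∑ j, (c i * conj (c j)) • (e i z * conj (e j z)) := fun z => by
    simp only [map_sum, map_mul, Finset.sum_mul_sum, smul_eq_mul]
    exact Finset.sum_congr rfl fun i _ => Finset.sum_congr rfl fun j _ => by ring
  unfold circleL2Norm
  congr 1
  apply Complex.ofReal_injective
  calc ((circleAverage (fun z => ‖∑ i, c i * e i z‖ ^ 2) 0 1 : ℝ) : ℂ)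
      = circleAverage (fun z => (∑ i, c i * e i z) * conj (∑ i, c i * e i z)) 0 1 := by
        have h := Complex.ofRealCLM.circleAverage_comp_comm hsq
        simp only [Complex.ofRealCLM_apply, Function.comp_def] at h
        simp only [← h, Complex.mul_conj', Complex.ofReal_pow]
    _ = ∑ i, ∑ j, (c i * conj (c j)) • circleAverage (fun z => e i z * conj (e j z)) 0 1 := by
        simp only [hexpand]
        rw [Real.circleAverage_fun_sum fun i _ =>
          CircleIntegrable.fun_sum _ fun j _ => hint i j _]
        simp only [Real.circleAverage_fun_sum fun j _ => hint _ j _, Real.circleAverage_fun_smul]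
    _ = ((∑ i, ‖c i‖ ^ 2 : ℝ) : ℂ) := by
        simp [horth, Complex.mul_conj']

section BlaschkeFactor

variable {a z : ℂ}

noncomputable def normalizedSzegoKernel (a z : ℂ) : ℂ :=
  (√(1 - ‖a‖ ^ 2) : ℂ) / (1 - conj a * z)

lemma one_sub_norm_le_norm_one_sub_conj_mul (hz : ‖z‖ ≤ 1) :
    1 - ‖a‖ ≤ ‖1 - conj a * z‖ := by
  have h : ‖conj a * z‖ ≤ ‖a‖ := by
    rw [norm_mul, RCLike.norm_conj]
    exact mul_le_of_le_one_right (norm_nonneg a) hz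
  linarith [norm_one (α := ℂ) ▸ norm_sub_norm_le (1 : ℂ) (conj a * z)]

lemma one_sub_conj_mul_ne_zero (ha : ‖a‖ < 1) (hz : ‖z‖ ≤ 1) : 1 - conj a * z ≠ 0 :=
  norm_pos_iff.1 ((sub_pos.2 ha).trans_le (one_sub_norm_le_norm_one_sub_conj_mul hz))

lemma norm_one_sub_conj_mul_of_norm_eq_one (hz : ‖z‖ = 1) :
    ‖1 - conj a * z‖ = ‖a - z‖ := by
  have hz' : conj z * z = 1 := by rw [Complex.conj_mul', hz]; norm_num
  rw [show 1 - conj a * z = conj (z - a) * z by rw [map_sub]; linear_combination -hz',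
    norm_mul, RCLike.norm_conj, hz, mul_one, norm_sub_rev]

lemma norm_blaschke6 (ha : ‖a‖ < 1) (hz : ‖z‖ = 1) : ‖blaschke6 a z‖ = 1 := by
  have h := one_sub_conj_mul_ne_zero ha hz.le
  rw [blaschke6, norm_div, ← norm_one_sub_conj_mul_of_norm_eq_one hz,
    div_self (norm_ne_zero_iff.2 h)]

lemma conj_normalizedSzegoKernel (ha : ‖a‖ < 1) (hz : ‖z‖ = 1) :
    conj (normalizedSzegoKernel a z) = √(1 - ‖a‖ ^ 2) * (z / (z - a)) := by
  have hz0 : z ≠ 0 := norm_ne_zero_iff.1 (hz ▸ one_ne_zero)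
  have hza : z - a ≠ 0 := sub_ne_zero.2 fun h => by rw [h] at hz; linarith
  rw [normalizedSzegoKernel, map_div₀, map_sub, map_mul, Complex.conj_conj, Complex.conj_ofReal,
    map_one, ← Complex.inv_eq_conj hz]
  field_simp

lemma hasDerivAt_blaschke6 (h : 1 - conj a * z ≠ 0) :
    HasDerivAt (blaschke6 a) ((conj a * a - 1) / (1 - conj a * z) ^ 2) z := by
  have := ((hasDerivAt_id z).const_sub a).fun_div
    (((hasDerivAt_id z).const_mul (conj a)).const_sub 1) h
  exact this.congr_deriv (by simp only [id]; ring)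

lemma hasDerivAt_normalizedSzegoKernel (h : 1 - conj a * z ≠ 0) :
    HasDerivAt (normalizedSzegoKernel a)
      (√(1 - ‖a‖ ^ 2) * conj a / (1 - conj a * z) ^ 2) z := by
  have := (hasDerivAt_const z (√(1 - ‖a‖ ^ 2) : ℂ)).fun_div
    (((hasDerivAt_id z).const_mul (conj a)).const_sub 1) h
  exact this.congr_deriv (by simp only [id]; ring)

lemma sqrt_one_sub_norm_sq_ne_zero (ha : ‖a‖ < 1) : (√(1 - ‖a‖ ^ 2) : ℂ) ≠ 0 := by
  have : ‖a‖ ^ 2 < 1 := by nlinarith [norm_nonneg a]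
  exact_mod_cast (Real.sqrt_pos.2 (by linarith)).ne'

lemma normalizedSzegoKernel_ne_zero (ha : ‖a‖ < 1) (h : 1 - conj a * z ≠ 0) :
    normalizedSzegoKernel a z ≠ 0 :=
  div_ne_zero (sqrt_one_sub_norm_sq_ne_zero ha) h

lemma sqrt_mul_normalizedSzegoKernel_self (ha : ‖a‖ < 1) :
    √(1 - ‖a‖ ^ 2) * normalizedSzegoKernel a a = 1 := by
  have hpos : 0 < 1 - ‖a‖ ^ 2 := by nlinarith [norm_nonneg a]
  rw [normalizedSzegoKernel, Complex.conj_mul', mul_div_assoc', ← Complex.ofReal_mul,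
    Real.mul_self_sqrt hpos.le]
  push_cast
  exact div_self (by exact_mod_cast hpos.ne')

lemma logDeriv_normalizedSzegoKernel (ha : ‖a‖ < 1) (h : 1 - conj a * z ≠ 0) :
    logDeriv (normalizedSzegoKernel a) z = conj a / (1 - conj a * z) := by
  have hs := sqrt_one_sub_norm_sq_ne_zero ha
  rw [logDeriv_apply, (hasDerivAt_normalizedSzegoKernel h).deriv, normalizedSzegoKernel]
  field_simp

/- On the circle `|b_a| = 1` and `|1 - āz| ≥ 1 - |a|`, so
`|b_a'/b_a| = (1 - |a|²) / |1 - āz|² ≤ (1 + |a|) / (1 - |a|)`. -/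
lemma norm_logDeriv_blaschke6_le {r : ℝ} (hr : r < 1) (ha : ‖a‖ ≤ r) (hz : ‖z‖ = 1) :
    ‖logDeriv (blaschke6 a) z‖ ≤ 2 / (1 - r) := by
  have ha1 : ‖a‖ < 1 := ha.trans_lt hr
  have hD := one_sub_norm_le_norm_one_sub_conj_mul (a := a) hz.le
  have hnum : ‖conj a * a - 1‖ = 1 - ‖a‖ ^ 2 := by
    rw [Complex.conj_mul', norm_sub_rev, ← Complex.ofReal_pow, ← Complex.ofReal_one,
      ← Complex.ofReal_sub, Complex.norm_real, Real.norm_of_nonneg (by nlinarith [norm_nonneg a])]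
  rw [logDeriv_apply, (hasDerivAt_blaschke6 (one_sub_conj_mul_ne_zero ha1 hz.le)).deriv,
    norm_div, norm_blaschke6 ha1 hz, div_one, norm_div, norm_pow, hnum,
    div_le_div_iff₀ (by nlinarith [norm_nonneg a]) (by linarith)]
  nlinarith [norm_nonneg a, mul_le_mul hD hD (by linarith) (norm_nonneg _)]

lemma norm_logDeriv_normalizedSzegoKernel_le {r : ℝ} (hr : r < 1) (ha : ‖a‖ ≤ r)
    (hz : ‖z‖ ≤ 1) : ‖logDeriv (normalizedSzegoKernel a) z‖ ≤ 1 / (1 - r) := by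
  have ha1 : ‖a‖ < 1 := ha.trans_lt hr
  rw [logDeriv_normalizedSzegoKernel ha1 (one_sub_conj_mul_ne_zero ha1 hz), norm_div,
    RCLike.norm_conj]
  exact div_le_div₀ zero_le_one ha1.le (by linarith)
    ((sub_le_sub_left ha 1).trans (one_sub_norm_le_norm_one_sub_conj_mul hz))

lemma blaschke6_ne_zero (ha : ‖a‖ < 1) (hz : ‖z‖ = 1) : blaschke6 a z ≠ 0 :=
  norm_ne_zero_iff.1 (by rw [norm_blaschke6 ha hz]; exact one_ne_zero)

lemma continuousOn_logDeriv_of_differentiableOn {f : ℂ → ℂ} {U s : Set ℂ}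
    (hf : DifferentiableOn ℂ f U) (hU : IsOpen U) (hsU : s ⊆ U) (hs : ∀ z ∈ s, f z ≠ 0) :
    ContinuousOn (logDeriv f) s :=
  ((hf.deriv hU).continuousOn.mono hsU).div (hf.continuousOn.mono hsU) hs

lemma isOpen_setOf_one_sub_conj_mul_ne_zero (a : ℂ) : IsOpen {z : ℂ | 1 - conj a * z ≠ 0} :=
  isOpen_ne_fun (by fun_prop) continuous_const

lemma closedBall_subset_setOf_one_sub_conj_mul_ne_zero (ha : ‖a‖ < 1) :
    closedBall (0 : ℂ) 1 ⊆ {z : ℂ | 1 - conj a * z ≠ 0} := fun _ hz =>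
  one_sub_conj_mul_ne_zero ha (mem_closedBall_zero_iff.1 hz)

lemma continuousOn_logDeriv_blaschke6 (ha : ‖a‖ < 1) :
    ContinuousOn (logDeriv (blaschke6 a)) (sphere 0 1) :=
  continuousOn_logDeriv_of_differentiableOn
    (fun _ hz => (hasDerivAt_blaschke6 hz).differentiableAt.differentiableWithinAt)
    (isOpen_setOf_one_sub_conj_mul_ne_zero a)
    (sphere_subset_closedBall.trans (closedBall_subset_setOf_one_sub_conj_mul_ne_zero ha))
    fun _ hz => blaschke6_ne_zero ha (mem_sphere_zero_iff_norm.1 hz)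

lemma continuousOn_logDeriv_normalizedSzegoKernel (ha : ‖a‖ < 1) :
    ContinuousOn (logDeriv (normalizedSzegoKernel a)) (sphere 0 1) :=
  continuousOn_logDeriv_of_differentiableOn
    (fun _ hz => (hasDerivAt_normalizedSzegoKernel hz).differentiableAt.differentiableWithinAt)
    (isOpen_setOf_one_sub_conj_mul_ne_zero a)
    (sphere_subset_closedBall.trans (closedBall_subset_setOf_one_sub_conj_mul_ne_zero ha))
    fun _ hz => normalizedSzegoKernel_ne_zero ha
      (one_sub_conj_mul_ne_zero ha (mem_sphere_zero_iff_norm.1 hz).le)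

end BlaschkeFactor

section MalmquistBasis

variable {n : ℕ} {l : Fin n → ℂ} {z : ℂ}

lemma malmquist6_eq_prod_mul (n : ℕ) (l : Fin n → ℂ) (k : Fin n) :
    malmquist6 n l k =
      fun z => (∏ j ∈ Finset.univ.filter (· < k), blaschke6 (l j) z) *
        normalizedSzegoKernel (l k) z := rfl

lemma differentiableAt_prod_blaschke6_mul_normalizedSzegoKernel (hl : ∀ j, ‖l j‖ < 1)
    (s : Finset (Fin n)) (k : Fin n) (hz : ‖z‖ ≤ 1) :
    DifferentiableAt ℂ
      (fun z => (∏ j ∈ s, blaschke6 (l j) z) * normalizedSzegoKernel (l k) z) z :=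
  (DifferentiableAt.fun_finsetProd fun j _ =>
    (hasDerivAt_blaschke6 (one_sub_conj_mul_ne_zero (hl j) hz)).differentiableAt).mul
    (hasDerivAt_normalizedSzegoKernel (one_sub_conj_mul_ne_zero (hl k) hz)).differentiableAt

lemma differentiableAt_malmquist6 (hl : ∀ j, ‖l j‖ < 1) (k : Fin n) (hz : ‖z‖ ≤ 1) :
    DifferentiableAt ℂ (malmquist6 n l k) z :=
  differentiableAt_prod_blaschke6_mul_normalizedSzegoKernel hl _ k hz

lemma continuousOn_malmquist6 (hl : ∀ j, ‖l j‖ < 1) (k : Fin n) :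
    ContinuousOn (malmquist6 n l k) (sphere 0 1) := fun _ hz =>
  (differentiableAt_malmquist6 hl k
    (mem_sphere_zero_iff_norm.1 hz).le).continuousAt.continuousWithinAt

lemma prod_blaschke6_ne_zero (hl : ∀ j, ‖l j‖ < 1) (s : Finset (Fin n)) (hz : ‖z‖ = 1) :
    ∏ j ∈ s, blaschke6 (l j) z ≠ 0 :=
  Finset.prod_ne_zero_iff.2 fun j _ => blaschke6_ne_zero (hl j) hz

lemma malmquist6_ne_zero (hl : ∀ j, ‖l j‖ < 1) (k : Fin n) (hz : ‖z‖ = 1) :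
    malmquist6 n l k z ≠ 0 :=
  mul_ne_zero (prod_blaschke6_ne_zero hl _ hz)
    (normalizedSzegoKernel_ne_zero (hl k) (one_sub_conj_mul_ne_zero (hl k) hz.le))

lemma logDeriv_malmquist6 (hl : ∀ j, ‖l j‖ < 1) (k : Fin n) (hz : ‖z‖ = 1) :
    logDeriv (malmquist6 n l k) z =
      ∑ j ∈ Finset.univ.filter (· < k), logDeriv (blaschke6 (l j)) z +
        logDeriv (normalizedSzegoKernel (l k)) z := by
  have hdb : ∀ j ∈ Finset.univ.filter (· < k), DifferentiableAt ℂ (blaschke6 (l j)) z :=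
    fun j _ => (hasDerivAt_blaschke6 (one_sub_conj_mul_ne_zero (hl j) hz.le)).differentiableAt
  have hk := one_sub_conj_mul_ne_zero (hl k) hz.le
  rw [malmquist6_eq_prod_mul, logDeriv_mul z (prod_blaschke6_ne_zero hl _ hz)
    (normalizedSzegoKernel_ne_zero (hl k) hk) (DifferentiableAt.fun_finsetProd hdb)
    (hasDerivAt_normalizedSzegoKernel hk).differentiableAt,
    logDeriv_prod (fun j _ => blaschke6_ne_zero (hl j) hz) hdb]

lemma malmquist6_mul_conj_of_le (hl : ∀ j, ‖l j‖ < 1) {k m : Fin n} (hmk : m ≤ k)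
    (hz : ‖z‖ = 1) :
    malmquist6 n l k z * conj (malmquist6 n l m z) =
      (z / (z - l m)) • (√(1 - ‖l m‖ ^ 2) *
        ((∏ j ∈ Finset.univ.filter (· < k) \ Finset.univ.filter (· < m), blaschke6 (l j) z) *
          normalizedSzegoKernel (l k) z)) := by
  have hsub : Finset.univ.filter (· < m) ⊆ Finset.univ.filter (· < k) := fun j hj => by
    simp only [Finset.mem_filter, Finset.mem_univ, true_and] at hj ⊢
    exact hj.trans_le hmk
  have hconj : ∀ j, conj (blaschke6 (l j) z) = (blaschke6 (l j) z)⁻¹ := fun j =>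
    (Complex.inv_eq_conj (norm_blaschke6 (hl j) hz)).symm
  have hP := prod_blaschke6_ne_zero hl (Finset.univ.filter (· < m)) hz
  simp only [malmquist6_eq_prod_mul, map_mul, map_prod, hconj, Finset.prod_inv_distrib,
    conj_normalizedSzegoKernel (hl m) hz, ← Finset.prod_sdiff hsub, smul_eq_mul]
  field_simp

theorem circleAverage_malmquist6_mul_conj_of_le (hl : ∀ j, ‖l j‖ < 1) {k m : Fin n}
    (hmk : m ≤ k) :
    circleAverage (fun z => malmquist6 n l k z * conj (malmquist6 n l m z)) 0 1 =
      if k = m then 1 else 0 := by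
  set S := Finset.univ.filter (· < k) \ Finset.univ.filter (· < m) with hS
  set G : ℂ → ℂ := fun z => √(1 - ‖l m‖ ^ 2) *
    ((∏ j ∈ S, blaschke6 (l j) z) * normalizedSzegoKernel (l k) z)
  have hG : DiffContOnCl ℂ G (ball 0 |1|) := by
    refine DifferentiableOn.diffContOnCl fun z hz => ?_
    rw [abs_one, closure_ball 0 one_ne_zero, mem_closedBall_zero_iff] at hz
    exact ((differentiableAt_prod_blaschke6_mul_normalizedSzegoKernel hl S k hz).const_mul
      _).differentiableWithinAt
  have hcauchy := hG.circleAverage_smul_div (w := l m) (by simpa using hl m)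
  simp only [sub_zero] at hcauchy
  rw [Real.circleAverage_congr_sphere fun z hz => malmquist6_mul_conj_of_le hl hmk
      (by simpa using hz), hcauchy]
  split_ifs with hkm
  · subst hkm
    simp only [G, hS, Finset.sdiff_self, Finset.prod_empty, one_mul]
    exact sqrt_mul_normalizedSzegoKernel_self (hl k)
  · have hm : m ∈ S := by simpa [hS] using lt_of_le_of_ne hmk (Ne.symm hkm)
    simp [G, Finset.prod_eq_zero (f := fun j => blaschke6 (l j) (l m)) hm (by simp [blaschke6])]

theorem circleAverage_malmquist6_mul_conj (hl : ∀ j, ‖l j‖ < 1) (k m : Fin n) :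
    circleAverage (fun z => malmquist6 n l k z * conj (malmquist6 n l m z)) 0 1 =
      if k = m then 1 else 0 := by
  rcases le_total m k with hmk | hkm
  · exact circleAverage_malmquist6_mul_conj_of_le hl hmk
  · have hint : CircleIntegrable (fun z => malmquist6 n l m z * conj (malmquist6 n l k z)) 0 1 :=
      ((continuousOn_malmquist6 hl m).mul (continuous_conj.comp_continuousOn
        (continuousOn_malmquist6 hl k))).circleIntegrable zero_le_one
    have h := (Complex.conjCLE : ℂ →L[ℝ] ℂ).circleAverage_comp_comm hint
    rw [circleAverage_malmquist6_mul_conj_of_le hl hkm] at h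
    simp only [Function.comp_def, ContinuousLinearEquiv.coe_coe, Complex.conjCLE_apply, map_mul,
      Complex.conj_conj, apply_ite conj, map_one, map_zero, eq_comm (a := m)] at h
    simpa only [mul_comm] using h

noncomputable def malmquistSum (n : ℕ) (l c : Fin n → ℂ) (z : ℂ) : ℂ :=
  ∑ k, c k * malmquist6 n l k z

lemma continuousOn_malmquistSum (hl : ∀ j, ‖l j‖ < 1) (c : Fin n → ℂ) :
    ContinuousOn (malmquistSum n l c) (sphere 0 1) :=
  continuousOn_finsetSum _ fun k _ => continuousOn_const.mul (continuousOn_malmquist6 hl k)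

lemma deriv_malmquistSum (hl : ∀ j, ‖l j‖ < 1) (c : Fin n → ℂ) (hz : ‖z‖ = 1) :
    deriv (malmquistSum n l c) z =
      ∑ j, (logDeriv (blaschke6 (l j)) z *
          malmquistSum n l (fun k => if j < k then c k else 0) z +
        logDeriv (normalizedSzegoKernel (l j)) z *
          malmquistSum n l (fun k => if k = j then c k else 0) z) := by
  have hderiv : ∀ k, deriv (malmquist6 n l k) z = malmquist6 n l k z *
      (∑ j ∈ Finset.univ.filter (· < k), logDeriv (blaschke6 (l j)) z +
        logDeriv (normalizedSzegoKernel (l k)) z) := fun k => by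
    rw [← logDeriv_malmquist6 hl k hz, logDeriv_apply,
      mul_div_cancel₀ _ (malmquist6_ne_zero hl k hz)]
  have hsum : HasDerivAt (malmquistSum n l c) (∑ k, c k * deriv (malmquist6 n l k) z) z :=
    HasDerivAt.fun_sum fun k _ =>
      (differentiableAt_malmquist6 hl k hz.le).hasDerivAt.const_mul (c k)
  rw [hsum.deriv]
  simp only [hderiv, malmquistSum, Finset.sum_filter, mul_add, Finset.mul_sum, mul_ite, ite_mul,
    mul_zero, zero_mul, Finset.sum_ite_eq', Finset.mem_univ, if_true, Finset.sum_add_distrib]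
  rw [Finset.sum_comm]
  congr 1
  · exact Finset.sum_congr rfl fun j _ => Finset.sum_congr rfl fun k _ => by split_ifs <;> ring
  · exact Finset.sum_congr rfl fun k _ => by ring

theorem circleL2Norm_malmquistSum (hl : ∀ j, ‖l j‖ < 1) (c : Fin n → ℂ) :
    circleL2Norm (malmquistSum n l c) = √(∑ k, ‖c k‖ ^ 2) :=
  circleL2Norm_sum_of_orthonormal (continuousOn_malmquist6 hl)
    (circleAverage_malmquist6_mul_conj hl) c

lemma circleL2Norm_malmquistSum_le (hl : ∀ j, ‖l j‖ < 1) {c d : Fin n → ℂ}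
    (h : ∀ k, ‖d k‖ ≤ ‖c k‖) :
    circleL2Norm (malmquistSum n l d) ≤ circleL2Norm (malmquistSum n l c) := by
  rw [circleL2Norm_malmquistSum hl, circleL2Norm_malmquistSum hl]
  gcongr with k
  exact h k

theorem circleL2Norm_deriv_malmquistSum_le {r : ℝ} (hr : r < 1) (hl : ∀ j, ‖l j‖ ≤ r)
    (c : Fin n → ℂ) :
    circleL2Norm (deriv (malmquistSum n l c)) ≤
      3 * n / (1 - r) * circleL2Norm (malmquistSum n l c) := by
  have hl1 : ∀ j, ‖l j‖ < 1 := fun j => (hl j).trans_lt hr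
  set M := circleL2Norm (malmquistSum n l c)
  set tail : Fin n → ℂ → ℂ := fun j => malmquistSum n l (fun k => if j < k then c k else 0)
  set single : Fin n → ℂ → ℂ :=
    fun j => malmquistSum n l (fun k => if k = j then c k else 0)
  have hβ : ∀ j, ContinuousOn (fun z => logDeriv (blaschke6 (l j)) z * tail j z) (sphere 0 1) :=
    fun j => (continuousOn_logDeriv_blaschke6 (hl1 j)).mul (continuousOn_malmquistSum hl1 _)
  have hω : ∀ j, ContinuousOn (fun z => logDeriv (normalizedSzegoKernel (l j)) z * single j z)
      (sphere 0 1) := fun j =>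
    (continuousOn_logDeriv_normalizedSzegoKernel (hl1 j)).mul (continuousOn_malmquistSum hl1 _)
  have hterm : ∀ j, circleL2Norm (fun z => logDeriv (blaschke6 (l j)) z * tail j z +
      logDeriv (normalizedSzegoKernel (l j)) z * single j z) ≤ 3 / (1 - r) * M := fun j =>
    calc _ ≤ 2 / (1 - r) * circleL2Norm (tail j) + 1 / (1 - r) * circleL2Norm (single j) :=
          (circleL2Norm_add_le (hβ j) (hω j)).trans <| add_le_add
            (circleL2Norm_mul_le (continuousOn_logDeriv_blaschke6 (hl1 j))
              (continuousOn_malmquistSum hl1 _) fun z hz =>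
                norm_logDeriv_blaschke6_le hr (hl j) (mem_sphere_zero_iff_norm.1 hz))
            (circleL2Norm_mul_le (continuousOn_logDeriv_normalizedSzegoKernel (hl1 j))
              (continuousOn_malmquistSum hl1 _) fun z hz =>
                norm_logDeriv_normalizedSzegoKernel_le hr (hl j) (mem_sphere_zero_iff_norm.1 hz).le)
      _ ≤ 2 / (1 - r) * M + 1 / (1 - r) * M := by
          gcongr <;> exact circleL2Norm_malmquistSum_le hl1 fun k => by split_ifs <;> simp
      _ = 3 / (1 - r) * M := by ring
  calc circleL2Norm (deriv (malmquistSum n l c))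
      = circleL2Norm (fun z => ∑ j, (logDeriv (blaschke6 (l j)) z * tail j z +
          logDeriv (normalizedSzegoKernel (l j)) z * single j z)) :=
        circleL2Norm_congr fun z hz => deriv_malmquistSum hl1 c (mem_sphere_zero_iff_norm.1 hz)
    _ ≤ ∑ j : Fin n, 3 / (1 - r) * M :=
        (circleL2Norm_sum_le _ fun j _ => (hβ j).add (hω j)).trans
          (Finset.sum_le_sum fun j _ => hterm j)
    _ = 3 * n / (1 - r) * M := by
        rw [Finset.sum_const, Finset.card_univ, Fintype.card_fin, nsmul_eq_mul]
        ring

end MalmquistBasis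

end Malmquist

open Malmquist

theorem stmt_6_general (n : ℕ) (l : Fin n → ℂ) (r : ℝ) (hr : r < 1)
    (hl : ∀ j, ‖l j‖ ≤ r) (f : ℂ → ℂ) (c : Fin n → ℂ)
    (hf : ∀ z : ℂ, ‖z‖ * r < 1 → f z = ∑ k, c k * malmquist6 n l k z) :
    Real.sqrt ((1 / (2 * Real.pi)) *
        ∫ θ in (0:ℝ)..(2 * Real.pi),
          ‖deriv f (Complex.exp (θ * Complex.I))‖ ^ 2) ≤
      (3 * n / (1 - r)) *
        Real.sqrt ((1 / (2 * Real.pi)) *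
          ∫ θ in (0:ℝ)..(2 * Real.pi),
            ‖f (Complex.exp (θ * Complex.I))‖ ^ 2) := by
  have hU : IsOpen {z : ℂ | ‖z‖ * r < 1} := isOpen_lt (by fun_prop) continuous_const
  have hsphere : sphere (0 : ℂ) 1 ⊆ {z : ℂ | ‖z‖ * r < 1} := fun z hz => by
    simpa [mem_sphere_zero_iff_norm.1 hz] using hr
  have hfF : EqOn f (malmquistSum n l c) (sphere 0 1) := fun z hz => hf z (hsphere hz)
  have hderiv : EqOn (deriv f) (deriv (malmquistSum n l c)) (sphere 0 1) := fun z hz =>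
    Filter.EventuallyEq.deriv_eq (Filter.eventually_of_mem (hU.mem_nhds (hsphere hz)) hf)
  have hnorm : ∀ g : ℂ → ℂ, √((1 / (2 * π)) * ∫ θ in (0:ℝ)..(2 * π),
      ‖g (Complex.exp (θ * Complex.I))‖ ^ 2) = circleL2Norm g := fun g => by
    simp [circleL2Norm, Real.circleAverage_def, circleMap]
  rw [hnorm, hnorm, circleL2Norm_congr hfF, circleL2Norm_congr hderiv]
  exact circleL2Norm_deriv_malmquistSum_le hr hl c

/-- Bernstein-type inequality `‖f'‖_{H²} ≤ (3n/(1-r)) ‖f‖_{H²}`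
for `f` in the model space `K_B` (= span of the Malmquist basis), where the
`H²` norms are realized as boundary integrals. -/
theorem stmt_6 (n : ℕ) (l : Fin n → ℂ) (r : ℝ) (hr0 : 0 ≤ r) (hr : r < 1)
    (hl : ∀ j, ‖l j‖ ≤ r) (f : ℂ → ℂ) (c : Fin n → ℂ)
    (hf : ∀ z : ℂ, ‖z‖ * r < 1 → f z = ∑ k, c k * malmquist6 n l k z) :
    Real.sqrt ((1 / (2 * Real.pi)) *
        ∫ θ in (0:ℝ)..(2 * Real.pi),
          ‖deriv f (Complex.exp (θ * Complex.I))‖ ^ 2) ≤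
      (3 * n / (1 - r)) *
        Real.sqrt ((1 / (2 * Real.pi)) *
          ∫ θ in (0:ℝ)..(2 * Real.pi),
            ‖f (Complex.exp (θ * Complex.I))‖ ^ 2) :=
  stmt_6_general n l r hr hl f c hf
end

section
/- Let λ = -r with 0 ≤ r < 1, n ≥ 1, and let Q_n(z) = ∑_{k=0}^{n-1} (1-r²)^{1/2} b_λ(z)^k / (1 - conj(λ)z). Then the composition Q_n ∘ b_λ is the polynomial (1-r²)^{-1/2}·(1 + (1+r)∑_{k=1}^{n-1} z^k + r z^n), which has nonnegative real coefficients. -/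
open Complex Metric

noncomputable def blaschke11 (l z : ℂ) : ℂ := (l - z) / (1 - (starRingEnd ℂ) l * z)

/-- `Q_n(w) = ∑_{k=0}^{n-1} √(1-r²) b_{-r}(w)^k / (1 + r w)` (here `λ = -r`,
so `1 - conj(λ) w = 1 + r w`). -/
noncomputable def Qn11 (n : ℕ) (r : ℝ) (w : ℂ) : ℂ :=
  ∑ k ∈ Finset.range n,
    (Real.sqrt (1 - r ^ 2) : ℂ) * (blaschke11 (-(r : ℂ)) w) ^ k /
      (1 - (starRingEnd ℂ) (-(r : ℂ)) * w)

/-- `Q_n ∘ b_λ` (for `λ = -r`) is the polynomial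
`(1-r²)^{-1/2} (1 + (1+r)∑_{k=1}^{n-1} z^k + r z^n)`, whose coefficients are
nonnegative reals. -/
theorem stmt_11 (n : ℕ) (hn : 1 ≤ n) (r : ℝ) (hr0 : 0 ≤ r) (hr : r < 1) :
    ∃ c : ℕ → ℝ, (∀ j, 0 ≤ c j) ∧ c 0 = 1 ∧
      (∀ k, 1 ≤ k → k ≤ n - 1 → c k = 1 + r) ∧ c n = r ∧
      (∀ j, n < j → c j = 0) ∧
      ∀ z ∈ ball (0:ℂ) 1,
        Qn11 n r (blaschke11 (-(r : ℂ)) z) =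
          ((Real.sqrt (1 - r ^ 2) : ℂ))⁻¹ *
            ∑ j ∈ Finset.range (n + 1), (c j : ℂ) * z ^ j := by
  have hs : (0:ℝ) < 1 - r ^ 2 := by nlinarith
  set c : ℕ → ℝ := fun j =>
    (if j < n then 1 else 0) + (if 1 ≤ j ∧ j ≤ n then r else 0) with hc
  have poly : ∀ z : ℂ, ∑ j ∈ Finset.range (n + 1), (c j : ℂ) * z ^ j
      = (1 + (r:ℂ) * z) * ∑ k ∈ Finset.range n, z ^ k := by
    intro z
    have hsplit : ∀ j, (c j : ℂ) * z ^ j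
        = (if j < n then z ^ j else 0) + (if 1 ≤ j ∧ j ≤ n then (r:ℂ) * z ^ j else 0) := by
      intro j
      simp only [hc]
      split_ifs <;> push_cast <;> ring
    rw [Finset.sum_congr rfl (fun j _ => hsplit j), Finset.sum_add_distrib]
    have h1 : ∑ j ∈ Finset.range (n + 1), (if j < n then z ^ j else 0)
        = ∑ j ∈ Finset.range n, z ^ j := by
      rw [Finset.sum_range_succ, if_neg (lt_irrefl n), add_zero]
      exact Finset.sum_congr rfl fun j hj => if_pos (Finset.mem_range.mp hj)
    have h2 : ∑ j ∈ Finset.range (n + 1), (if 1 ≤ j ∧ j ≤ n then (r:ℂ) * z ^ j else 0)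
        = (r:ℂ) * z * ∑ k ∈ Finset.range n, z ^ k := by
      rw [Finset.sum_range_succ']
      have : ∀ i ∈ Finset.range n, (if 1 ≤ i + 1 ∧ i + 1 ≤ n then (r:ℂ) * z ^ (i+1) else 0)
          = (r:ℂ) * z * z ^ i := by
        intro i hi
        rw [if_pos ⟨Nat.le_add_left 1 i, Finset.mem_range.mp hi⟩]
        ring
      rw [Finset.sum_congr rfl this]
      simp [Finset.mul_sum]
    rw [h1, h2]; ring
  refine ⟨c, ?_, ?_, ?_, ?_, ?_, ?_⟩
  · intro j; simp only [hc]; split_ifs <;> norm_num <;> linarith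
  · simp only [hc]; rw [if_pos (show 0 < n by omega), if_neg (by omega)]; norm_num
  · intro k hk1 hk2; simp only [hc]
    rw [if_pos (by omega), if_pos ⟨hk1, by omega⟩]
  · simp only [hc]; rw [if_neg (lt_irrefl n), if_pos ⟨hn, le_refl n⟩]; norm_num
  · intro j hj; simp only [hc]; rw [if_neg (by omega), if_neg (by omega)]; norm_num
  · intro z hz
    have hz1 : ‖z‖ < 1 := by simpa [Metric.mem_ball] using hz
    have h1 : (1:ℂ) + (r:ℂ) * z ≠ 0 := by
      intro h
      have hrz : (r:ℂ) * z = -1 := by linear_combination h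
      have h2 : ‖(r:ℂ) * z‖ = 1 := by rw [hrz]; simp
      rw [norm_mul, Complex.norm_real, Real.norm_eq_abs, _root_.abs_of_nonneg hr0] at h2
      nlinarith [norm_nonneg z]
    have hsC : (1:ℂ) - (r:ℂ) ^ 2 ≠ 0 := by
      have : ((1 - r ^ 2 : ℝ) : ℂ) ≠ 0 := by exact_mod_cast hs.ne'
      simpa using this
    have hsqrtC : ((Real.sqrt (1 - r ^ 2)) : ℂ) ≠ 0 := by
      exact_mod_cast Complex.ofReal_ne_zero.mpr (by positivity)
    have hss : ((Real.sqrt (1 - r ^ 2)) : ℂ) ^ 2 = 1 - (r:ℂ) ^ 2 := by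
      rw [← Complex.ofReal_pow, Real.sq_sqrt hs.le]; push_cast; ring
    have hconj : (starRingEnd ℂ) (-(r:ℂ)) = -(r:ℂ) := by
      simp [Complex.conj_ofReal]
    have hbden : (1:ℂ) - (starRingEnd ℂ) (-(r:ℂ)) * blaschke11 (-(r:ℂ)) z
        = (1 - (r:ℂ) ^ 2) / (1 + (r:ℂ) * z) := by
      rw [blaschke11, hconj]
      rw [show (1:ℂ) - -(r:ℂ) * z = 1 + (r:ℂ) * z from by ring]
      field_simp
      ring
    have hbden' : (1:ℂ) - (starRingEnd ℂ) (-(r:ℂ)) * blaschke11 (-(r:ℂ)) z ≠ 0 := by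
      rw [hbden]; exact div_ne_zero hsC h1
    have hinv : blaschke11 (-(r:ℂ)) (blaschke11 (-(r:ℂ)) z) = z := by
      rw [show blaschke11 (-(r:ℂ)) (blaschke11 (-(r:ℂ)) z)
          = (-(r:ℂ) - blaschke11 (-(r:ℂ)) z) /
            (1 - (starRingEnd ℂ) (-(r:ℂ)) * blaschke11 (-(r:ℂ)) z) from rfl]
      rw [hbden]
      rw [blaschke11, hconj]
      rw [show (1:ℂ) - -(r:ℂ) * z = 1 + (r:ℂ) * z from by ring]
      field_simp
      ring
    rw [Qn11]
    simp only [hinv, hbden]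
    rw [poly z]
    rw [← Finset.sum_div, ← Finset.mul_sum]
    rw [div_div_eq_mul_div, div_eq_iff hsC, eq_comm, inv_mul_eq_div,
      div_mul_eq_mul_div, div_eq_iff hsqrtC]
    linear_combination (-(1 + (r:ℂ) * z)) * (∑ k ∈ Finset.range n, z ^ k) * hss
end
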